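/- arXiv:2307.00207 — 5 statements merged into one kernel-verified Lean document; each statement's English description precedes it below -/
import Mathlib

section
/- The optimal net output p(γ) of the drift-plus-penalty ES problem, as a function of the combined price γ (for fixed virtual queue q), given by the piecewise linear formula p(γ) = −P^max if γ ≤ −(q + P^max τ η^c)η^c/V; p(γ) = (q η^c + Vγ)/(τ(η^c)²) if −(q + P^max τ η^c)η^c/V ≤ γ ≤ −q η^c/V; p(γ) = 0 if −q η^c/V ≤ γ ≤ −q/(V η^d); p(γ) = (q/η^d + Vγ)/(τ/(η^d)²) if −q/(V η^d) ≤ γ ≤ (P^max τ − q η^d)/(V(η^d)²); p(γ) = P^max otherwise; is a continuous and nondecreasing function of γ, provided q ≤ 0. -/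
/-- The optimal ES net output as a piecewise-linear function of the combined
price `γ`, for a fixed virtual queue value `q`. -/
noncomputable def strategyOfPrice (τ ηc ηd Pmax V q : ℝ) (γ : ℝ) : ℝ :=
  if γ ≤ -(q + Pmax * τ * ηc) * ηc / V then -Pmax
  else if γ ≤ -(q * ηc) / V then (q * ηc + V * γ) / (τ * ηc ^ 2)
  else if γ ≤ -q / (V * ηd) then 0
  else if γ ≤ (Pmax * τ - q * ηd) / (V * ηd ^ 2) then
    (q / ηd + V * γ) / (τ / ηd ^ 2)
  else Pmax

/-- For `q ≤ 0`, the optimal net output is a continuous, nondecreasing function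
of the combined price, with values in `[-Pmax, Pmax]`. -/
theorem strategyOfPrice_continuous_monotone
    (τ ηc ηd Pmax V q : ℝ)
    (hτ : 0 < τ) (hηc : ηc ∈ Set.Ioc (0:ℝ) 1) (hηd : ηd ∈ Set.Ioc (0:ℝ) 1)
    (hP : 0 < Pmax) (hV : 0 < V) (hq : q ≤ 0) :
    Continuous (strategyOfPrice τ ηc ηd Pmax V q) ∧
    Monotone (strategyOfPrice τ ηc ηd Pmax V q) ∧
    ∀ γ : ℝ, strategyOfPrice τ ηc ηd Pmax V q γ ∈ Set.Icc (-Pmax) Pmax := by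
  obtain ⟨hc0, hc1⟩ := hηc
  obtain ⟨hd0, hd1⟩ := hηd
  have hden1 : 0 < τ * ηc ^ 2 := by positivity
  set L1 : ℝ → ℝ := fun γ => (q * ηc + V * γ) / (τ * ηc ^ 2) with hL1
  set L2 : ℝ → ℝ := fun γ => (q * ηd + V * γ * ηd ^ 2) / τ with hL2
  have hL2eq : ∀ γ : ℝ, (q / ηd + V * γ) / (τ / ηd ^ 2) = L2 γ := by
    intro γ
    rw [hL2]
    field_simp
  set F : ℝ → ℝ :=
    fun γ => max (-Pmax) (min Pmax (min (L1 γ) 0 + max (L2 γ) 0)) with hF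
  have key : strategyOfPrice τ ηc ηd Pmax V q = F := by
    funext γ
    unfold strategyOfPrice
    rw [hL2eq γ]
    simp only [hF, hL1, hL2]
    split_ifs with h1 h2 h3 h4
    · -- γ ≤ a : L1 ≤ -Pmax, L2 ≤ 0
      rw [le_div_iff₀ hV] at h1
      have e1 : (q * ηc + V * γ) / (τ * ηc ^ 2) ≤ -Pmax := by
        rw [div_le_iff₀ hden1]; nlinarith
      have h2' : γ * V ≤ -(q * ηc) := by
        nlinarith [mul_pos (mul_pos hP hτ) (mul_pos hc0 hc0)]
      have hcd : ηc * ηd ≤ 1 := by nlinarith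
      have e2 : (q * ηd + V * γ * ηd ^ 2) / τ ≤ 0 := by
        apply div_nonpos_of_nonpos_of_nonneg _ hτ.le
        nlinarith [mul_le_mul_of_nonneg_right h2' (sq_nonneg ηd),
          mul_nonneg (mul_nonneg (neg_nonneg.2 hq) hd0.le) (sub_nonneg.2 hcd)]
      rw [min_eq_left (e1.trans (by linarith)), max_eq_right e2, add_zero,
        min_eq_right (e1.trans (by linarith)), max_eq_left e1]
    · -- a < γ ≤ b : -Pmax ≤ L1 ≤ 0, L2 ≤ 0
      push_neg at h1
      rw [div_lt_iff₀ hV] at h1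
      rw [le_div_iff₀ hV] at h2
      have e0 : -Pmax ≤ (q * ηc + V * γ) / (τ * ηc ^ 2) := by
        rw [le_div_iff₀ hden1]; nlinarith
      have e1 : (q * ηc + V * γ) / (τ * ηc ^ 2) ≤ 0 := by
        apply div_nonpos_of_nonpos_of_nonneg _ hden1.le; nlinarith
      have hcd : ηc * ηd ≤ 1 := by nlinarith
      have e2 : (q * ηd + V * γ * ηd ^ 2) / τ ≤ 0 := by
        apply div_nonpos_of_nonpos_of_nonneg _ hτ.le
        nlinarith [mul_le_mul_of_nonneg_right h2 (sq_nonneg ηd),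
          mul_nonneg (mul_nonneg (neg_nonneg.2 hq) hd0.le) (sub_nonneg.2 hcd)]
      rw [min_eq_left e1, max_eq_right e2, add_zero,
        min_eq_right (e1.trans hP.le), max_eq_right e0]
    · -- b < γ ≤ c : L1 ≥ 0, L2 ≤ 0
      push_neg at h2
      rw [div_lt_iff₀ hV] at h2
      rw [le_div_iff₀ (by positivity : (0:ℝ) < V * ηd)] at h3
      have e1 : 0 ≤ (q * ηc + V * γ) / (τ * ηc ^ 2) := by
        apply div_nonneg _ hden1.le; nlinarith
      have e2 : (q * ηd + V * γ * ηd ^ 2) / τ ≤ 0 := by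
        apply div_nonpos_of_nonpos_of_nonneg _ hτ.le; nlinarith
      rw [min_eq_right e1, max_eq_right e2, add_zero,
        min_eq_right hP.le, max_eq_right (by linarith)]
    · -- c < γ ≤ d : L1 ≥ 0, 0 ≤ L2 ≤ Pmax
      push_neg at h2 h3
      rw [div_lt_iff₀ hV] at h2
      rw [div_lt_iff₀ (by positivity : (0:ℝ) < V * ηd)] at h3
      rw [le_div_iff₀ (by positivity : (0:ℝ) < V * ηd ^ 2)] at h4
      have e1 : 0 ≤ (q * ηc + V * γ) / (τ * ηc ^ 2) := by
        apply div_nonneg _ hden1.le; nlinarith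
      have e2 : 0 ≤ (q * ηd + V * γ * ηd ^ 2) / τ := by
        apply div_nonneg _ hτ.le; nlinarith
      have e3 : (q * ηd + V * γ * ηd ^ 2) / τ ≤ Pmax := by
        rw [div_le_iff₀ hτ]; nlinarith
      rw [min_eq_right e1, max_eq_left e2, zero_add,
        min_eq_right e3, max_eq_right (by linarith)]
    · -- γ > d : L1 ≥ 0, L2 ≥ Pmax
      push_neg at h2 h4
      rw [div_lt_iff₀ hV] at h2
      rw [div_lt_iff₀ (by positivity : (0:ℝ) < V * ηd ^ 2)] at h4
      have e1 : 0 ≤ (q * ηc + V * γ) / (τ * ηc ^ 2) := by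
        apply div_nonneg _ hden1.le; nlinarith
      have e3 : Pmax ≤ (q * ηd + V * γ * ηd ^ 2) / τ := by
        rw [le_div_iff₀ hτ]; nlinarith
      rw [min_eq_right e1, max_eq_left (hP.le.trans e3), zero_add,
        min_eq_left e3, max_eq_right (by linarith)]
  rw [key]
  have hmono1 : Monotone L1 := by
    intro x y hxy
    simp only [hL1]
    gcongr
  have hmono2 : Monotone L2 := by
    intro x y hxy
    simp only [hL2]
    gcongr
  have hmono : Monotone F := by
    intro x y hxy
    simp only [hF]
    gcongr
    · exact hmono1 hxy
    · exact hmono2 hxy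
  refine ⟨?_, hmono, ?_⟩
  · apply Continuous.max continuous_const
    apply Continuous.min continuous_const
    apply Continuous.add
    · apply Continuous.min _ continuous_const
      exact (continuous_const.add (continuous_const.mul continuous_id)).div_const _
    · apply Continuous.max _ continuous_const
      exact (continuous_const.add ((continuous_const.mul continuous_id).mul
        continuous_const)).div_const _
  · intro γ
    constructor
    · exact le_max_left _ _
    · exact max_le (by linarith) (min_le_left _ _)
end

section
/- (One-step queue invariance) Let τ > 0, η^c, η^d ∈ (0,1], P^max > 0, V > 0, and assume the price γ_t ∈ [γ̲, γ̄] with 0 ≤ γ̲ < γ̄ η^c η^d. Suppose E and V satisfy 0 < V ≤ η^c(Ē − E̲)/(γ̄ η^c η^d − γ̲) and E̲ + V γ̄ η^d ≤ E ≤ Ē + V γ̲/η^c. If q_t ∈ [E̲ − E, Ē − E] and q_{t+1} = q_t + p_t^c τ η^c − p_t^d τ/η^d where (p_t^c, p_t^d) is the optimal drift-plus-penalty strategy, then q_{t+1} ∈ [E̲ − E, Ē − E]. -/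
/-- The piecewise-linear optimal net output of the drift-plus-penalty problem. -/
noncomputable def optNetOutput (τ ηc ηd Pmax V γ q : ℝ) : ℝ :=
  if q ≤ -(V * γ) / ηc - Pmax * τ * ηc then -Pmax
  else if q ≤ -(V * γ) / ηc then (q * ηc + V * γ) / (τ * ηc ^ 2)
  else if q ≤ -(V * γ) * ηd then 0
  else if q ≤ -(V * γ) * ηd + Pmax * τ / ηd then (q / ηd + V * γ) / (τ / ηd ^ 2)
  else Pmax

/-- One-step queue invariance: if the virtual queue lies in
`[E̲ - E, Ē - E]` and the price lies in `[γ̲, γ̄]`, then after one step of the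
optimal drift-plus-penalty strategy the queue stays in `[E̲ - E, Ē - E]`. -/
theorem one_step_queue_invariance
    (τ ηc ηd Pmax V E Elo Ehi γlo γhi γt qt : ℝ)
    (hτ : 0 < τ) (hηc : ηc ∈ Set.Ioc (0:ℝ) 1) (hηd : ηd ∈ Set.Ioc (0:ℝ) 1)
    (hP : 0 < Pmax) (hE : Elo < Ehi)
    (hγlo : 0 ≤ γlo) (hγ : γlo < γhi * ηc * ηd)
    (hγt : γt ∈ Set.Icc γlo γhi)
    (hV : 0 < V) (hVle : V ≤ ηc * (Ehi - Elo) / (γhi * ηc * ηd - γlo))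
    (hElb : Elo + V * γhi * ηd ≤ E) (hEub : E ≤ Ehi + V * γlo / ηc)
    (hqt : qt ∈ Set.Icc (Elo - E) (Ehi - E)) :
    let p := optNetOutput τ ηc ηd Pmax V γt qt
    let pc := max (-p) 0
    let pd := max p 0
    qt + pc * τ * ηc - pd * τ / ηd ∈ Set.Icc (Elo - E) (Ehi - E) := by
  obtain ⟨hηc0, hηc1⟩ := hηc
  obtain ⟨hηd0, hηd1⟩ := hηd
  obtain ⟨hγt1, hγt2⟩ := hγt
  obtain ⟨hq1, hq2⟩ := hqt
  have ha : 0 ≤ V * γt := mul_nonneg hV.le (hγlo.trans hγt1)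
  -- upper bound fact : -(V*γt)/ηc ≤ Ehi - E
  have hub : -(V * γt) / ηc ≤ Ehi - E := by
    rw [div_le_iff₀ hηc0]
    have h1 : E - Ehi ≤ V * γlo / ηc := by linarith
    have h2 : (E - Ehi) * ηc ≤ V * γlo := (le_div_iff₀ hηc0).mp h1
    nlinarith [mul_le_mul_of_nonneg_left hγt1 hV.le]
  -- lower bound fact : Elo - E ≤ -(V*γt)*ηd
  have hlb : Elo - E ≤ -(V * γt) * ηd := by
    nlinarith [mul_le_mul_of_nonneg_right (mul_le_mul_of_nonneg_left hγt2 hV.le) hηd0.le]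
  simp only [optNetOutput, Set.mem_Icc]
  split_ifs with h1 h2 h3 h4
  · -- p = -Pmax, charge at full power
    rw [max_eq_left (by simp; linarith), max_eq_right (by linarith)]
    simp only [neg_neg, zero_mul, zero_div, sub_zero]
    constructor
    · nlinarith [mul_pos (mul_pos hP hτ) hηc0]
    · linarith
  · -- p = (qt*ηc + V*γt)/(τ*ηc²) ≤ 0
    have hnum : qt * ηc + V * γt ≤ 0 := by
      have := (le_div_iff₀ hηc0).mp h2
      linarith
    have hple : (qt * ηc + V * γt) / (τ * ηc ^ 2) ≤ 0 :=
      div_nonpos_of_nonpos_of_nonneg hnum (by positivity)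
    rw [max_eq_left (by linarith), max_eq_right hple]
    have key : qt + -((qt * ηc + V * γt) / (τ * ηc ^ 2)) * τ * ηc - 0 * τ / ηd
        = -(V * γt) / ηc := by
      field_simp
      ring
    rw [key]
    exact ⟨le_trans hq1 h2, hub⟩
  · -- p = 0
    simp only [neg_zero, max_self, zero_mul, zero_div, add_zero, sub_zero]
    exact ⟨hq1, hq2⟩
  · -- p = (qt/ηd + V*γt)/(τ/ηd²) ≥ 0
    push_neg at h3
    have hnum : 0 ≤ qt / ηd + V * γt := by
      have : -(V * γt) < qt / ηd := by
        rw [lt_div_iff₀ hηd0]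
        nlinarith
      linarith
    have hpge : 0 ≤ (qt / ηd + V * γt) / (τ / ηd ^ 2) :=
      div_nonneg hnum (by positivity)
    rw [max_eq_right (by linarith), max_eq_left hpge]
    have key : qt + 0 * τ * ηc - (qt / ηd + V * γt) / (τ / ηd ^ 2) * τ / ηd
        = -(V * γt) * ηd := by
      field_simp
      ring
    rw [key]
    refine ⟨hlb, le_trans (le_of_lt h3) hq2⟩
  · -- p = Pmax, discharge at full power
    push_neg at h3 h4
    rw [max_eq_right (by linarith), max_eq_left hP.le]
    have hpos : 0 ≤ Pmax * τ / ηd := by positivity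
    constructor
    · have : -(V * γt) * ηd + Pmax * τ / ηd < qt := h4
      simp only [zero_mul, add_zero]
      linarith
    · simp only [zero_mul, add_zero]
      linarith
end

section
/- (SoC feasibility under Lyapunov policy, Theorem 1) Assume γ_t ∈ [γ̲, γ̄] for all t with 0 ≤ γ̲ < γ̄ η^c η^d. If 0 < V ≤ η^c(Ē − E̲)/(γ̄ η^c η^d − γ̲) and E̲ + V γ̄ η^d ≤ E ≤ Ē + V γ̲/η^c, then under the Lyapunov drift-plus-penalty operation strategy, the stored energy e_t = q_t + E satisfies E̲ ≤ e_t ≤ Ē for all t ≥ 1, provided e_1 ∈ [E̲, Ē]. -/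
lemma step_aux (τ ηc ηd Pmax V E Elo Ehi γ e : ℝ)
    (hτ : 0 < τ) (hc0 : 0 < ηc) (hd0 : 0 < ηd)
    (hP : 0 < Pmax) (hVγ : 0 ≤ V * γ)
    (hup : E - V * γ / ηc ≤ Ehi) (hlo : Elo ≤ E - V * γ * ηd)
    (hel : Elo ≤ e) (heh : e ≤ Ehi) :
    Elo ≤ e + max (-(optNetOutput τ ηc ηd Pmax V γ (e - E))) 0 * τ * ηc
        - max (optNetOutput τ ηc ηd Pmax V γ (e - E)) 0 * τ / ηd ∧
    e + max (-(optNetOutput τ ηc ηd Pmax V γ (e - E))) 0 * τ * ηc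
        - max (optNetOutput τ ηc ηd Pmax V γ (e - E)) 0 * τ / ηd ≤ Ehi := by
  unfold optNetOutput
  have hτc : 0 < τ * ηc ^ 2 := by positivity
  have hτd : 0 < τ / ηd ^ 2 := by positivity
  split_ifs with h1 h2 h3 h4
  · -- p = -Pmax
    rw [neg_neg, max_eq_left hP.le, max_eq_right (neg_nonpos.mpr hP.le)]
    rw [neg_div] at h1
    simp only [zero_mul, zero_div, sub_zero]
    have hPτc : 0 ≤ Pmax * τ * ηc := by positivity
    exact ⟨by linarith, by linarith⟩
  · -- p = (qηc+Vγ)/(τηc²) ≤ 0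
    have hnum : (e - E) * ηc + V * γ ≤ 0 := by
      have hdc : -(V * γ) / ηc * ηc = -(V * γ) := div_mul_cancel₀ _ hc0.ne'
      nlinarith [mul_le_mul_of_nonneg_right h2 hc0.le]
    have hple : ((e - E) * ηc + V * γ) / (τ * ηc ^ 2) ≤ 0 :=
      div_nonpos_of_nonpos_of_nonneg hnum hτc.le
    rw [max_eq_left (by linarith [neg_nonneg.mpr hple]), max_eq_right hple]
    simp only [zero_mul, zero_div, sub_zero]
    constructor
    · nlinarith [mul_nonneg (mul_nonneg (neg_nonneg.mpr hple) hτ.le) hc0.le]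
    · have key : -(((e - E) * ηc + V * γ) / (τ * ηc ^ 2)) * τ * ηc
          = E - e - V * γ / ηc := by
        field_simp
        ring
      rw [key]; linarith
  · -- p = 0
    simp only [neg_zero, max_self, zero_mul, mul_zero, zero_div, add_zero, sub_zero]
    exact ⟨hel, heh⟩
  · -- p = (q/ηd+Vγ)/(τ/ηd²) ≥ 0
    push_neg at h3
    have hnum : 0 ≤ (e - E) / ηd + V * γ := by
      have : -(V * γ) < (e - E) / ηd := by
        rw [lt_div_iff₀ hd0]; nlinarith
      linarith
    have hpge : 0 ≤ ((e - E) / ηd + V * γ) / (τ / ηd ^ 2) := div_nonneg hnum hτd.le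
    rw [max_eq_right (neg_nonpos.mpr hpge), max_eq_left hpge]
    simp only [zero_mul, add_zero]
    constructor
    · have key : ((e - E) / ηd + V * γ) / (τ / ηd ^ 2) * τ / ηd
          = e - E + V * γ * ηd := by
        field_simp
      rw [key]; linarith
    · have : 0 ≤ ((e - E) / ηd + V * γ) / (τ / ηd ^ 2) * τ / ηd := by positivity
      linarith
  · -- p = Pmax
    push_neg at h4
    rw [max_eq_right (neg_nonpos.mpr hP.le), max_eq_left hP.le]
    simp only [zero_mul, add_zero]
    constructor
    · linarith
    · have : 0 ≤ Pmax * τ / ηd := by positivity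
      linarith

/-- SoC feasibility under the Lyapunov drift-plus-penalty policy (Theorem 1):
if the prices always lie in `[γ̲, γ̄]` and the parameters `V, E` satisfy the
stated bounds, then the stored energy stays in `[E̲, Ē]` in every period. -/
theorem soc_feasibility_lyapunov
    (τ ηc ηd Pmax V E Elo Ehi γlo γhi : ℝ)
    (hτ : 0 < τ) (hηc : ηc ∈ Set.Ioc (0:ℝ) 1) (hηd : ηd ∈ Set.Ioc (0:ℝ) 1)
    (hP : 0 < Pmax) (hElt : Elo < Ehi)
    (hγlo : 0 ≤ γlo) (hγ : γlo < γhi * ηc * ηd)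
    (hV : 0 < V) (hVle : V ≤ ηc * (Ehi - Elo) / (γhi * ηc * ηd - γlo))
    (hElb : Elo + V * γhi * ηd ≤ E) (hEub : E ≤ Ehi + V * γlo / ηc)
    (γ : ℕ → ℝ) (hγt : ∀ t, γ t ∈ Set.Icc γlo γhi)
    (e : ℕ → ℝ) (he1 : e 1 ∈ Set.Icc Elo Ehi)
    (hrec : ∀ t ≥ 1,
      e (t + 1) = e t
        + max (-(optNetOutput τ ηc ηd Pmax V (γ t) (e t - E))) 0 * τ * ηc
        - max (optNetOutput τ ηc ηd Pmax V (γ t) (e t - E)) 0 * τ / ηd) :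
    ∀ t ≥ 1, Elo ≤ e t ∧ e t ≤ Ehi := by
  obtain ⟨hc0, hc1⟩ := hηc
  obtain ⟨hd0, hd1⟩ := hηd
  intro t ht
  induction t with
  | zero => omega
  | succ n ih =>
    rcases Nat.lt_or_ge 1 (n + 1) with hn | hn
    · have hn1 : n ≥ 1 := by omega
      obtain ⟨hl, hh⟩ := ih hn1
      obtain ⟨hg1, hg2⟩ := hγt n
      have hVγ : 0 ≤ V * (γ n) := mul_nonneg hV.le (le_trans hγlo hg1)
      have hup : E - V * (γ n) / ηc ≤ Ehi := by
        have h : V * γlo / ηc ≤ V * (γ n) / ηc := by gcongr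
        linarith
      have hlo : Elo ≤ E - V * (γ n) * ηd := by
        have h : V * (γ n) * ηd ≤ V * γhi * ηd := by gcongr
        linarith
      rw [hrec n hn1]
      exact step_aux τ ηc ηd Pmax V E Elo Ehi (γ n) (e n) hτ hc0 hd0 hP hVγ hup hlo hl hh
    · have h1 : n + 1 = 1 := by omega
      rw [h1]; exact ⟨he1.1, he1.2⟩
end

section
/- The constraints −Vγ/η^c ≤ Ē − E and −Vγη^d ≥ E̲ − E for all γ ∈ [γ̲, γ̄], with V > 0 and 0 ≤ γ̲ < γ̄η^cη^d, hold if and only if E̲ + V γ̄ η^d ≤ E ≤ Ē + V γ̲/η^c. Moreover, such an E exists if and only if V ≤ η^c(Ē − E̲)/(γ̄ η^c η^d − γ̲). -/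
/-- The endpoint characterization of the queue-safety constraints, and the
existence condition for a suitable parameter `E`. -/
theorem parameter_range_characterization
    (ηc ηd V γlo γhi Elo Ehi : ℝ)
    (hηc : ηc ∈ Set.Ioc (0:ℝ) 1) (hηd : ηd ∈ Set.Ioc (0:ℝ) 1)
    (hV : 0 < V) (hγlo : 0 ≤ γlo) (hγ : γlo < γhi * ηc * ηd)
    (hE : Elo < Ehi) :
    (∀ E : ℝ,
      ((∀ γ ∈ Set.Icc γlo γhi,
          -(V * γ) / ηc ≤ Ehi - E ∧ Elo - E ≤ -(V * γ) * ηd)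
        ↔ (Elo + V * γhi * ηd ≤ E ∧ E ≤ Ehi + V * γlo / ηc))) ∧
    ((∃ E : ℝ, Elo + V * γhi * ηd ≤ E ∧ E ≤ Ehi + V * γlo / ηc)
      ↔ V ≤ ηc * (Ehi - Elo) / (γhi * ηc * ηd - γlo)) := by
  obtain ⟨hc, hc1⟩ := hηc
  obtain ⟨hd, hd1⟩ := hηd
  have hγhi : 0 < γhi := by nlinarith [mul_pos hc hd]
  have hcd : ηc * ηd ≤ 1 := by nlinarith
  have hγlohi : γlo ≤ γhi := by nlinarith [mul_le_mul_of_nonneg_left hcd hγhi.le]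
  have hpos : 0 < γhi * ηc * ηd - γlo := by linarith
  constructor
  · intro E
    constructor
    · intro h
      have h1 := h γlo ⟨le_refl _, hγlohi⟩
      have h2 := h γhi ⟨hγlohi, le_refl _⟩
      refine ⟨by linarith [h2.2], ?_⟩
      have key : -(V * γlo) ≤ (Ehi - E) * ηc := (div_le_iff₀ hc).mp h1.1
      have h3 : (E - Ehi) * ηc ≤ V * γlo := by nlinarith
      have h4 := (le_div_iff₀ hc).mpr h3
      linarith
    · rintro ⟨ha, hb⟩ γ ⟨hγ1, hγ2⟩
      constructor
      · rw [div_le_iff₀ hc]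
        have h4 : E - Ehi ≤ V * γlo / ηc := by linarith
        have h5 : (E - Ehi) * ηc ≤ V * γlo := (le_div_iff₀ hc).mp h4
        nlinarith
      · nlinarith [mul_nonneg (mul_nonneg hV.le hd.le) (sub_nonneg.mpr hγ2)]
  · constructor
    · rintro ⟨E, h1, h2⟩
      have h3 : Elo + V * γhi * ηd ≤ Ehi + V * γlo / ηc := le_trans h1 h2
      rw [le_div_iff₀ hpos]
      have h4 : V * γlo / ηc * ηc = V * γlo := div_mul_cancel₀ _ hc.ne'
      have h5 : (Elo + V * γhi * ηd) * ηc ≤ (Ehi + V * γlo / ηc) * ηc :=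
        mul_le_mul_of_nonneg_right h3 hc.le
      nlinarith
    · intro h
      refine ⟨Elo + V * γhi * ηd, le_refl _, ?_⟩
      rw [le_div_iff₀ hpos] at h
      have h6 : (Elo + V * γhi * ηd - Ehi) * ηc ≤ V * γlo := by nlinarith
      have h7 := (le_div_iff₀ hc).mpr h6
      linarith
end

section
/- (Output bounds imply power and SoC feasibility) Under the parameter choice E̲ − E = −Vγ̄η^d and Ē − E = −Vγ̲/η^c with q_t ∈ [E̲ − E, Ē − E], define P̲_t = −P^max if q_t ≤ −Vγ̲/η^c − P^maxτη^c, P̲_t = (q_tη^c + Vγ̲)/(τ(η^c)²) if −Vγ̲/η^c − P^maxτη^c ≤ q_t ≤ −Vγ̲/η^c, and P̲_t = 0 otherwise; define P̄_t = 0 if q_t ≤ −Vγ̄η^d, P̄_t = (q_t/η^d + Vγ̄)/(τ/(η^d)²) if −Vγ̄η^d ≤ q_t ≤ −Vγ̄η^d + P^maxτ/η^d, and P̄_t = P^max otherwise. Then for any p_t ∈ [P̲_t, P̄_t], we have p_t ∈ [−P^max, P^max] and the updated queue q_{t+1} = q_t + max(−p_t,0)τη^c − max(p_t,0)τ/η^d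 satisfies q_{t+1} ∈ [E̲ − E, Ē − E], regardless of whether the realized price lies in [γ̲, γ̄]. -/
/-- Output bounds imply power and SoC feasibility: under the parameter
relations `E̲ - E = -V γ̄ η^d` and `Ē - E = -V γ̲ / η^c`, any dispatch within
the submitted bounds `[P̲_t, P̄_t]` respects the power limit `[-Pmax, Pmax]`
and keeps the updated virtual queue in `[E̲ - E, Ē - E]`, regardless of the
realized price. -/
theorem output_bounds_feasibility
    (τ ηc ηd Pmax V E Elo Ehi γlo γhi qt : ℝ)
    (hτ : 0 < τ) (hηc : ηc ∈ Set.Ioc (0:ℝ) 1) (hηd : ηd ∈ Set.Ioc (0:ℝ) 1)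
    (hP : 0 < Pmax) (hV : 0 < V) (hE : Elo < Ehi)
    (hγlo : 0 ≤ γlo) (hγ : γlo < γhi * ηc * ηd)
    (hlo : Elo - E = -(V * γhi) * ηd) (hhi : Ehi - E = -(V * γlo) / ηc)
    (hqt : qt ∈ Set.Icc (Elo - E) (Ehi - E)) :
    let Plo := if qt ≤ -(V * γlo) / ηc - Pmax * τ * ηc then -Pmax
      else if qt ≤ -(V * γlo) / ηc then (qt * ηc + V * γlo) / (τ * ηc ^ 2)
      else 0
    let Phi := if qt ≤ -(V * γhi) * ηd then 0
      else if qt ≤ -(V * γhi) * ηd + Pmax * τ / ηd then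
        (qt / ηd + V * γhi) / (τ / ηd ^ 2)
      else Pmax
    ∀ p ∈ Set.Icc Plo Phi,
      p ∈ Set.Icc (-Pmax) Pmax ∧
      qt + max (-p) 0 * τ * ηc - max p 0 * τ / ηd
        ∈ Set.Icc (Elo - E) (Ehi - E) := by
  obtain ⟨hηc0, hηc1⟩ := hηc
  obtain ⟨hηd0, hηd1⟩ := hηd
  rw [hlo, hhi] at hqt ⊢
  obtain ⟨hqA, hqB⟩ := hqt
  intro Plo Phi p hp
  obtain ⟨hpl, hpu⟩ := hp
  set a : ℝ := -(V * γhi) * ηd with ha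
  set b : ℝ := -(V * γlo) / ηc with hbdef
  have hb : b * ηc = -(V * γlo) := div_mul_cancel₀ _ (ne_of_gt hηc0)
  -- facts about Plo
  have hPlo_eq2 : (qt * ηc + V * γlo) / (τ * ηc ^ 2) = (qt - b) / (τ * ηc) := by
    rw [div_eq_div_iff (by positivity) (by positivity)]
    linear_combination (τ * ηc) * hb
  have hPlo_le0 : Plo ≤ 0 := by
    simp only [Plo]
    split_ifs with h1
    · linarith
    · rw [hPlo_eq2]
      exact div_nonpos_of_nonpos_of_nonneg (by linarith) (by positivity)
  have hPlo_geP : -Pmax ≤ Plo := by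
    simp only [Plo]
    split_ifs with h1
    · exact le_refl _
    · rw [hPlo_eq2, le_div_iff₀ (by positivity)]
      push_neg at h1
      nlinarith
  have hPlo_q : qt - b ≤ Plo * (τ * ηc) := by
    simp only [Plo]
    split_ifs with h1
    · nlinarith
    · rw [hPlo_eq2, div_mul_cancel₀ _ (by positivity : (τ*ηc) ≠ 0)]
  -- facts about Phi
  have hPhi_eq2 : (qt / ηd + V * γhi) / (τ / ηd ^ 2) = (qt - a) * ηd / τ := by
    rw [div_eq_div_iff (by positivity) (by positivity)]
    field_simp
    ring
  have hPhi_ge0 : 0 ≤ Phi := by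
    simp only [Phi]
    split_ifs with h1 h2
    · exact le_refl _
    · rw [hPhi_eq2]
      push_neg at h1
      have hqa : 0 ≤ qt - a := by linarith
      positivity
    · linarith
  have hPhi_leP : Phi ≤ Pmax := by
    simp only [Phi]
    split_ifs with h1 h2
    · linarith
    · rw [hPhi_eq2, div_le_iff₀ hτ]
      have h2' : (Pmax * τ / ηd) * ηd = Pmax * τ := div_mul_cancel₀ _ (ne_of_gt hηd0)
      nlinarith [mul_le_mul_of_nonneg_right h2 hηd0.le]
    · exact le_refl _
  have hPhi_q : Phi * τ / ηd ≤ qt - a := by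
    simp only [Phi]
    split_ifs with h1 h2
    · simp
      linarith
    · rw [hPhi_eq2]
      exact le_of_eq (by field_simp)
    · push_neg at h1 h2
      linarith
  refine ⟨⟨le_trans hPlo_geP hpl, le_trans hpu hPhi_leP⟩, ?_⟩
  rcases le_total p 0 with h | h
  · rw [max_eq_left (by linarith : (0:ℝ) ≤ -p), max_eq_right h]
    constructor
    · have : 0 ≤ -p * τ * ηc := by
        have : 0 ≤ -p := by linarith
        positivity
      simp only [zero_mul, zero_div]
      linarith
    · have hmul : -p * (τ * ηc) ≤ -Plo * (τ * ηc) :=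
        mul_le_mul_of_nonneg_right (by linarith) (by positivity)
      simp only [zero_mul, zero_div]
      nlinarith
  · rw [max_eq_right (by linarith : -p ≤ (0:ℝ)), max_eq_left h]
    constructor
    · have hmul : p * τ / ηd ≤ Phi * τ / ηd := by gcongr
      simp only [zero_mul]
      linarith
    · have : 0 ≤ p * τ / ηd := by positivity
      simp only [zero_mul]
      linarith
end
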